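/- Let Q be a nonempty weakly compact convex subset of a Banach space U and let T : Q → Q be a map such that there are functions β_n : Q → (0, ∞) and β : Q → [0, 1) with β_n(p) → β(p) as n → ∞ for each p ∈ Q (pointwise on Q), and such that for all p, q ∈ Q with ‖p − q‖ < r (r > 0 fixed) and every n ≥ 1, ‖Tⁿp − Tⁿq‖ ≤ β_n(p) ‖p − q‖. If there exists q₀ ∈ Q such that the asymptotic radius of the sequence (Tⁿq₀) relative to Q is strictly less than r, then T has a unique fixed point in Q. -/

import Mathlib

open Filter

/-- The asymptotic radius of a sequence `x` relative to a set `Q`: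
`inf { limsup_n ‖x n − y‖ : y ∈ Q }`. -/
noncomputable def asymptoticRadius {U : Type*} [NormedAddCommGroup U]
    (Q : Set U) (x : ℕ → U) : ℝ :=
  sInf ((fun y => limsup (fun n => ‖x n - y‖) atTop) '' Q)

/-!
The orbit `xₙ = Tⁿ q₀` stays in `Q`, which is norm bounded, so `ρ y = limsup ‖xₙ - y‖` is a
1-Lipschitz convex function. It is therefore weakly lower semicontinuous and attains its minimum
on the weakly compact set `Q` at some `w`, with `ρ w < r`. As the orbit eventually stays within `r`
of `w`, `ρ (Tᵐ w) ≤ βₘ(w) ρ w`; taking `m` with `βₘ(w) < 1`, minimality forces `ρ w = 0`, and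
then `ρ (T w) = 0` too, so the orbit converges both to `w` and to `T w`.
-/

open Set Function Topology

section WeakCompactness

variable {E : Type*} [NormedAddCommGroup E] [NormedSpace ℝ E]

/-- Embed weak-star compactly into the bidual and use the uniform boundedness principle there. -/
theorem isBounded_of_isCompact_toWeakSpace_image {Q : Set E}
    (hQ : IsCompact (toWeakSpace ℝ E '' Q)) : Bornology.IsBounded Q := by
  have hK := hQ.image (NormedSpace.inclusionInDoubleDualWeak ℝ E).continuous
  have hB := WeakDual.isBounded_iff_isVonNBounded.mpr (hK.isVonNBounded ℝ)
  rw [← WeakDual.isBounded_toWeakDual_preimage_iff_isBounded, isBounded_iff_forall_norm_le] at hB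
  obtain ⟨C, hC⟩ := hB
  refine isBounded_iff_forall_norm_le.mpr ⟨C, fun q hq => ?_⟩
  rw [← (NormedSpace.inclusionInDoubleDualLi ℝ).norm_map q]
  exact hC _ ⟨_, ⟨q, hq, rfl⟩, rfl⟩

/-- Sublevel sets are closed and convex, hence weakly closed. -/
theorem ConvexOn.lowerSemicontinuous_comp_toWeakSpace_symm {f : E → ℝ}
    (hf : ConvexOn ℝ univ f) (hc : LowerSemicontinuous f) :
    LowerSemicontinuous (f ∘ (toWeakSpace ℝ E).symm) := by
  rw [lowerSemicontinuous_iff_isClosed_preimage] at hc ⊢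
  intro b
  have hconv : Convex ℝ (f ⁻¹' Iic b) := by simpa [preimage, Iic] using hf.convex_le b
  have himage : f ∘ (toWeakSpace ℝ E).symm ⁻¹' Iic b = toWeakSpace ℝ E '' (f ⁻¹' Iic b) := by
    rw [LinearEquiv.image_eq_preimage_symm, preimage_comp]
  rw [himage, ← closure_eq_iff_isClosed, ← hconv.toWeakSpace_closure ℝ, (hc b).closure_eq]

theorem ConvexOn.exists_isMinOn_of_isCompact_toWeakSpace_image {f : E → ℝ}
    (hf : ConvexOn ℝ univ f) (hc : LowerSemicontinuous f) {Q : Set E} (hne : Q.Nonempty)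
    (hQ : IsCompact (toWeakSpace ℝ E '' Q)) : ∃ w ∈ Q, IsMinOn f Q w := by
  obtain ⟨_, ⟨w, hw, rfl⟩, hmin⟩ :=
    ((hf.lowerSemicontinuous_comp_toWeakSpace_symm hc).lowerSemicontinuousOn _).exists_isMinOn
      (hne.image _) hQ
  refine ⟨w, hw, isMinOn_iff.mpr fun y hy => ?_⟩
  simpa using isMinOn_iff.mp hmin _ ⟨y, hy, rfl⟩

end WeakCompactness

section AsymptoticRadius

variable {U : Type*} [NormedAddCommGroup U]

/-- `asymptoticRadius Q x = sInf (asymptoticRadiusAt x '' Q)`. Like every real `limsup`, this is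
a junk value unless `x` is bounded. -/
noncomputable def asymptoticRadiusAt (x : ℕ → U) (y : U) : ℝ :=
  limsup (fun n => ‖x n - y‖) atTop

variable {x : ℕ → U}

theorem isBoundedUnder_norm_sub (hx : Bornology.IsBounded (range x)) (y : U) :
    IsBoundedUnder (· ≤ ·) atTop fun n => ‖x n - y‖ := by
  obtain ⟨C, hC⟩ := isBounded_iff_forall_norm_le.mp hx
  exact isBoundedUnder_of ⟨C + ‖y‖, fun n => (norm_sub_le _ _).trans
    (add_le_add_left (hC _ (mem_range_self n)) _)⟩

theorem asymptoticRadiusAt_nonneg (hx : Bornology.IsBounded (range x)) (y : U) :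
    0 ≤ asymptoticRadiusAt x y :=
  le_limsup_of_frequently_le (Frequently.of_forall fun _ => norm_nonneg _)
    (isBoundedUnder_norm_sub hx y)

theorem asymptoticRadiusAt_le_of_eventually_le {y : U} {b : ℝ}
    (h : ∀ᶠ n in atTop, ‖x n - y‖ ≤ b) : asymptoticRadiusAt x y ≤ b :=
  limsup_le_of_le (isCoboundedUnder_le_of_le atTop fun _ => norm_nonneg _) h

theorem eventually_norm_sub_lt_of_asymptoticRadiusAt_lt (hx : Bornology.IsBounded (range x))
    {y : U} {b : ℝ} (h : asymptoticRadiusAt x y < b) : ∀ᶠ n in atTop, ‖x n - y‖ < b :=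
  eventually_lt_of_limsup_lt h (isBoundedUnder_norm_sub hx y)

theorem tendsto_of_asymptoticRadiusAt_eq_zero (hx : Bornology.IsBounded (range x)) {y : U}
    (h : asymptoticRadiusAt x y = 0) : Tendsto x atTop (𝓝 y) :=
  Metric.tendsto_nhds.mpr fun _ hε => by
    simpa only [dist_eq_norm] using eventually_norm_sub_lt_of_asymptoticRadiusAt_lt hx (h ▸ hε)

theorem asymptoticRadiusAt_le_add_norm_sub (hx : Bornology.IsBounded (range x)) (y z : U) :
    asymptoticRadiusAt x y ≤ asymptoticRadiusAt x z + ‖y - z‖ := by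
  refine le_of_forall_pos_le_add fun ε hε => asymptoticRadiusAt_le_of_eventually_le ?_
  filter_upwards [eventually_norm_sub_lt_of_asymptoticRadiusAt_lt hx
    (lt_add_of_pos_right (asymptoticRadiusAt x z) hε)] with n hn
  calc ‖x n - y‖ ≤ ‖x n - z‖ + ‖z - y‖ := norm_sub_le_norm_sub_add_norm_sub _ _ _
    _ ≤ asymptoticRadiusAt x z + ‖y - z‖ + ε := by rw [norm_sub_rev z y]; linarith

theorem lipschitzWith_one_asymptoticRadiusAt (hx : Bornology.IsBounded (range x)) :
    LipschitzWith 1 (asymptoticRadiusAt x) :=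
  LipschitzWith.of_le_add fun y z => by
    simpa only [dist_eq_norm] using asymptoticRadiusAt_le_add_norm_sub hx y z

theorem convexOn_asymptoticRadiusAt [NormedSpace ℝ U] (hx : Bornology.IsBounded (range x)) :
    ConvexOn ℝ univ (asymptoticRadiusAt x) := by
  refine ⟨convex_univ, fun y _ z _ a b ha hb hab => ?_⟩
  set ρ := asymptoticRadiusAt x
  refine le_of_forall_pos_le_add fun ε hε => asymptoticRadiusAt_le_of_eventually_le ?_
  filter_upwards
    [eventually_norm_sub_lt_of_asymptoticRadiusAt_lt hx (lt_add_of_pos_right (ρ y) hε),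
      eventually_norm_sub_lt_of_asymptoticRadiusAt_lt hx (lt_add_of_pos_right (ρ z) hε)]
    with n hy hz
  have hsplit : x n - (a • y + b • z) = a • (x n - y) + b • (x n - z) := by
    rw [smul_sub, smul_sub, ← add_sub_add_comm, ← add_smul, hab, one_smul]
  calc ‖x n - (a • y + b • z)‖ ≤ a * ‖x n - y‖ + b * ‖x n - z‖ := by
        rw [hsplit]
        refine (norm_add_le _ _).trans_eq ?_
        rw [norm_smul_of_nonneg ha, norm_smul_of_nonneg hb]
    _ ≤ a * (ρ y + ε) + b * (ρ z + ε) := by gcongr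
    _ = a • ρ y + b • ρ z + ε := by simp only [smul_eq_mul]; linear_combination ε * hab

/-- `w` is an asymptotic center of `x` relative to `Q`. -/
theorem exists_isMinOn_asymptoticRadiusAt [NormedSpace ℝ U] {Q : Set U}
    (hQ : IsCompact (toWeakSpace ℝ U '' Q)) (hxQ : ∀ n, x n ∈ Q) :
    ∃ w ∈ Q, IsMinOn (asymptoticRadiusAt x) Q w :=
  have hx := (isBounded_of_isCompact_toWeakSpace_image hQ).subset (range_subset_iff.mpr hxQ)
  (convexOn_asymptoticRadiusAt hx).exists_isMinOn_of_isCompact_toWeakSpace_image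
    (lipschitzWith_one_asymptoticRadiusAt hx).continuous.lowerSemicontinuous ⟨_, hxQ 0⟩ hQ

end AsymptoticRadius

section LocalIterateLipschitz

variable {U : Type*} [NormedAddCommGroup U]

def IsLocalIterateLipschitz (Q : Set U) (T : U → U) (r : ℝ) (βseq : ℕ → U → ℝ) : Prop :=
  ∀ p ∈ Q, ∀ q ∈ Q, ‖p - q‖ < r → ∀ n : ℕ, 1 ≤ n → ‖T^[n] p - T^[n] q‖ ≤ βseq n p * ‖p - q‖

variable {Q : Set U} {T : U → U} {r : ℝ} {βseq : ℕ → U → ℝ}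

theorem asymptoticRadiusAt_orbit_iterate_le {q₀ w : U} {m : ℕ} {c : ℝ}
    (hQ : Bornology.IsBounded Q) (horbit : ∀ n, T^[n] q₀ ∈ Q) (hc : 0 ≤ c)
    (hloc : ∀ q ∈ Q, ‖w - q‖ < r → ‖T^[m] w - T^[m] q‖ ≤ c * ‖w - q‖)
    (hw : asymptoticRadiusAt (T^[·] q₀) w < r) :
    asymptoticRadiusAt (T^[·] q₀) (T^[m] w) ≤ c * asymptoticRadiusAt (T^[·] q₀) w := by
  have hx : Bornology.IsBounded (range (T^[·] q₀)) := hQ.subset (range_subset_iff.mpr horbit)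
  have hbdd := isBoundedUnder_norm_sub hx w
  have hmono := monotone_mul_left_of_nonneg hc
  calc asymptoticRadiusAt (T^[·] q₀) (T^[m] w)
      = limsup (fun n => ‖T^[n + m] q₀ - T^[m] w‖) atTop := (limsup_nat_add _ m).symm
    _ ≤ limsup (fun n => c * ‖T^[n] q₀ - w‖) atTop := by
        refine limsup_le_limsup ?_ (isCoboundedUnder_le_of_le atTop fun _ => norm_nonneg _)
          (hmono.isBoundedUnder_le_comp hbdd)
        filter_upwards [eventually_norm_sub_lt_of_asymptoticRadiusAt_lt hx hw] with n hn
        rw [norm_sub_rev] at hn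
        rw [add_comm, iterate_add_apply, norm_sub_rev, norm_sub_rev (T^[n] q₀)]
        exact hloc _ (horbit n) hn
    _ = c * asymptoticRadiusAt (T^[·] q₀) w :=
        (hmono.map_limsup_of_continuousAt _ (continuous_const_mul c).continuousAt hbdd
          (isCoboundedUnder_le_of_le atTop fun _ => norm_nonneg _)).symm

theorem isFixedPt_of_isMinOn_asymptoticRadiusAt (hQ : Bornology.IsBounded Q)
    (hT : MapsTo T Q Q) (hloc : IsLocalIterateLipschitz Q T r βseq) {q₀ w : U} (hq₀ : q₀ ∈ Q)
    (hw : w ∈ Q) (hβw : ∀ n, 0 ≤ βseq n w)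
    (hmin : IsMinOn (asymptoticRadiusAt (T^[·] q₀)) Q w)
    (hwr : asymptoticRadiusAt (T^[·] q₀) w < r) {m : ℕ} (hm : 1 ≤ m) (hβm : βseq m w < 1) :
    IsFixedPt T w := by
  set ρ := asymptoticRadiusAt (T^[·] q₀)
  have horbit : ∀ n, T^[n] q₀ ∈ Q := fun n => hT.iterate n hq₀
  have hx : Bornology.IsBounded (range (T^[·] q₀)) := hQ.subset (range_subset_iff.mpr horbit)
  have hiterate (n : ℕ) (hn : 1 ≤ n) : ρ (T^[n] w) ≤ βseq n w * ρ w :=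
    asymptoticRadiusAt_orbit_iterate_le hQ horbit (hβw n)
      (fun q hq hwq => hloc w hw q hq hwq n hn) hwr
  have hρw : ρ w = 0 := by
    have := (isMinOn_iff.mp hmin _ (hT.iterate m hw)).trans (hiterate m hm)
    nlinarith [asymptoticRadiusAt_nonneg hx w]
  have hρTw : ρ (T w) = 0 :=
    le_antisymm (by simpa [hρw] using hiterate 1 le_rfl) (asymptoticRadiusAt_nonneg hx _)
  exact tendsto_nhds_unique (tendsto_of_asymptoticRadiusAt_eq_zero hx hρTw)
    (tendsto_of_asymptoticRadiusAt_eq_zero hx hρw)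

theorem IsLocalIterateLipschitz.norm_sub_le_sum (hloc : IsLocalIterateLipschitz Q T r βseq)
    {β : U → ℝ} (hlim : ∀ p ∈ Q, Tendsto (βseq · p) atTop (𝓝 (β p))) {z : ℕ → U} {k : ℕ}
    (hzQ : ∀ i ≤ k, z i ∈ Q) (hstep : ∀ i < k, ‖z i - z (i + 1)‖ < r)
    (h₀ : IsFixedPt T (z 0)) (hₖ : IsFixedPt T (z k)) :
    ‖z 0 - z k‖ ≤ ∑ i ∈ Finset.range k, β (z i) * ‖z i - z (i + 1)‖ := by
  refine ge_of_tendsto (tendsto_finsetSum _ fun i hi =>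
    (hlim _ (hzQ i (Finset.mem_range.mp hi).le)).mul_const _) ?_
  filter_upwards [eventually_ge_atTop 1] with n hn
  calc ‖z 0 - z k‖ = ‖T^[n] (z 0) - T^[n] (z k)‖ := by rw [(h₀.iterate n).eq, (hₖ.iterate n).eq]
    _ ≤ ∑ i ∈ Finset.range k, ‖T^[n] (z i) - T^[n] (z (i + 1))‖ := by
        simpa only [dist_eq_norm] using dist_le_range_sum_dist (fun i => T^[n] (z i)) k
    _ ≤ ∑ i ∈ Finset.range k, βseq n (z i) * ‖z i - z (i + 1)‖ := by
        refine Finset.sum_le_sum fun i hi => ?_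
        have hik := Finset.mem_range.mp hi
        exact hloc _ (hzQ i hik.le) _ (hzQ (i + 1) hik) (hstep i hik) n hn

/-- Fixed points are joined by a chain of `k` equally spaced points on a segment, with steps
shorter than `r`; in the limit each step is contracted by a factor `β < 1`. -/
theorem IsLocalIterateLipschitz.eq_of_isFixedPt [NormedSpace ℝ U]
    (hloc : IsLocalIterateLipschitz Q T r βseq) (hQ : Convex ℝ Q) (hr : 0 < r) {β : U → ℝ}
    (hlim : ∀ p ∈ Q, Tendsto (βseq · p) atTop (𝓝 (β p))) (hβ : ∀ p ∈ Q, β p < 1)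
    {u w : U} (hu : u ∈ Q) (hw : w ∈ Q) (hTu : IsFixedPt T u) (hTw : IsFixedPt T w) :
    u = w := by
  set d := ‖u - w‖
  obtain ⟨k, hk⟩ := exists_nat_gt (d / r)
  have hkpos : (0 : ℝ) < k := (div_nonneg (norm_nonneg _) hr.le).trans_lt hk
  set z : ℕ → U := fun i => AffineMap.lineMap u w ((i : ℝ) / k)
  have hzQ (i : ℕ) (hi : i ≤ k) : z i ∈ Q :=
    hQ.lineMap_mem hu hw ⟨by positivity, div_le_one_of_le₀ (by exact_mod_cast hi) hkpos.le⟩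
  have hstep (i : ℕ) : ‖z i - z (i + 1)‖ = d / k := by
    rw [← dist_eq_norm, dist_lineMap_lineMap, dist_eq_norm u w, Real.dist_eq, ← sub_div,
      Nat.cast_succ, sub_add_cancel_left, abs_div, abs_neg, abs_one, abs_of_pos hkpos,
      one_div_mul_eq_div]
  have hz₀ : z 0 = u := by simp [z]
  have hzₖ : z k = w := by simp [z, hkpos.ne']
  have hchain := hloc.norm_sub_le_sum hlim hzQ
    (fun i _ => (hstep i).symm ▸ (div_lt_iff₀ hkpos).mpr ((div_lt_iff₀' hr).mp hk))
    (hz₀ ▸ hTu) (hzₖ ▸ hTw)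
  simp only [hstep, hz₀, hzₖ] at hchain
  by_contra hne
  have hd : 0 < d := norm_pos_iff.mpr (sub_ne_zero.mpr hne)
  have hlt : ∑ i ∈ Finset.range k, β (z i) * (d / k) < ∑ _i ∈ Finset.range k, d / k :=
    Finset.sum_lt_sum_of_nonempty (Finset.nonempty_range_iff.mpr (by exact_mod_cast hkpos.ne'))
      fun i hi =>
        mul_lt_of_lt_one_left (div_pos hd hkpos) (hβ _ (hzQ i (Finset.mem_range.mp hi).le))
  rw [Finset.sum_const, Finset.card_range, nsmul_eq_mul, mul_div_cancel₀ _ hkpos.ne'] at hlt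
  linarith

end LocalIterateLipschitz

theorem unique_fixed_point_of_uniformly_local_pointwise_asymptotic_contraction_general
    {U : Type*} [NormedAddCommGroup U] [NormedSpace ℝ U]
    (Q : Set U) (hQconv : Convex ℝ Q)
    (hQwc : IsCompact (toWeakSpace ℝ U '' Q))
    (T : U → U) (hT : Set.MapsTo T Q Q)
    (r : ℝ) (hr : 0 < r)
    (βseq : ℕ → U → ℝ) (β : U → ℝ)
    (hβpos : ∀ n, ∀ p ∈ Q, 0 < βseq n p)
    (hβ1 : ∀ p ∈ Q, β p < 1)
    (hβlim : ∀ p ∈ Q, Tendsto (fun n => βseq n p) atTop (nhds (β p)))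
    (hTloc : ∀ p ∈ Q, ∀ q ∈ Q, ‖p - q‖ < r →
      ∀ n : ℕ, 1 ≤ n → ‖T^[n] p - T^[n] q‖ ≤ βseq n p * ‖p - q‖)
    (q₀ : U) (hq₀ : q₀ ∈ Q)
    (hrad : asymptoticRadius Q (fun n => T^[n] q₀) < r) :
    ∃! w, w ∈ Q ∧ T w = w := by
  have hloc : IsLocalIterateLipschitz Q T r βseq := hTloc
  obtain ⟨w, hwQ, hmin⟩ := exists_isMinOn_asymptoticRadiusAt hQwc fun n => hT.iterate n hq₀
  have hwr : asymptoticRadiusAt (T^[·] q₀) w < r := by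
    obtain ⟨_, ⟨y, hy, rfl⟩, hyr⟩ := exists_lt_of_csInf_lt ((nonempty_of_mem hq₀).image _) hrad
    exact (isMinOn_iff.mp hmin y hy).trans_lt hyr
  obtain ⟨m, hβm, hm⟩ :=
    (((hβlim w hwQ).eventually_lt_const (hβ1 w hwQ)).and (eventually_ge_atTop 1)).exists
  have hfix : IsFixedPt T w :=
    isFixedPt_of_isMinOn_asymptoticRadiusAt (isBounded_of_isCompact_toWeakSpace_image hQwc) hT
      hloc hq₀ hwQ (fun n => (hβpos n w hwQ).le) hmin hwr hm hβm
  exact ⟨w, ⟨hwQ, hfix⟩, fun u ⟨huQ, hTu⟩ =>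
    hloc.eq_of_isFixedPt hQconv hr hβlim hβ1 huQ hwQ hTu hfix⟩

theorem unique_fixed_point_of_uniformly_local_pointwise_asymptotic_contraction
    {U : Type*} [NormedAddCommGroup U] [NormedSpace ℝ U] [CompleteSpace U]
    (Q : Set U) (hQne : Q.Nonempty) (hQconv : Convex ℝ Q)
    (hQwc : IsCompact (toWeakSpace ℝ U '' Q))
    (T : U → U) (hT : Set.MapsTo T Q Q)
    (r : ℝ) (hr : 0 < r)
    (βseq : ℕ → U → ℝ) (β : U → ℝ)
    (hβpos : ∀ n, ∀ p ∈ Q, 0 < βseq n p)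
    (hβ0 : ∀ p ∈ Q, 0 ≤ β p) (hβ1 : ∀ p ∈ Q, β p < 1)
    (hβlim : ∀ p ∈ Q, Tendsto (fun n => βseq n p) atTop (nhds (β p)))
    (hTloc : ∀ p ∈ Q, ∀ q ∈ Q, ‖p - q‖ < r →
      ∀ n : ℕ, 1 ≤ n → ‖T^[n] p - T^[n] q‖ ≤ βseq n p * ‖p - q‖)
    (q₀ : U) (hq₀ : q₀ ∈ Q)
    (hrad : asymptoticRadius Q (fun n => T^[n] q₀) < r) :
    ∃! w, w ∈ Q ∧ T w = w :=
  unique_fixed_point_of_uniformly_local_pointwise_asymptotic_contraction_general Q hQconv hQwc T hT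
    r hr βseq β hβpos hβ1 hβlim hTloc q₀ hq₀ hrad
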